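/- Consider Γ = ℤ with ℓ(n) = |n| and φ(n) = 1/|n| for n ≠ 0, φ(0)=0, and SAWs on the complete graph over ℤ with weight ∏ φ(steps) and ℓ-length ∑ ℓ(steps). Then the total weight of SAWs from 0 with ℓ-length in [m, m+1) is at most 4^m; in particular the connective constant μ_{φ,ℓ} satisfies μ_{φ,ℓ} ≤ 4, even though ∑_n φ(n) = ∞. -/

import Mathlib

open Filter Topology
open scoped ENNReal

/-- The weight function `φ(n) = 1/|n|` (with `φ(0)=0`) on `ℤ`. -/
noncomputable def phiZ : ℤ → ℝ := fun k => if k = 0 then 0 else (|(k : ℝ)|)⁻¹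

/-- The length function `ℓ(n) = |n|` on `ℤ`. -/
def lenZ : ℤ → ℝ := fun k => |(k : ℝ)|

/-- An `n`-step self-avoiding walk from `0` on the complete graph over `ℤ`. -/
def ZSAW (n : ℕ) (π : Fin (n + 1) → ℤ) : Prop :=
  Function.Injective π ∧ π 0 = 0

/-- The weight of a walk on `ℤ`. -/
noncomputable def zWeight (n : ℕ) (π : Fin (n + 1) → ℤ) : ℝ :=
  ∏ i : Fin n, phiZ (π i.succ - π i.castSucc)

/-- The `ℓ`-length of a walk on `ℤ`. -/
noncomputable def zLen (n : ℕ) (π : Fin (n + 1) → ℤ) : ℝ :=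
  ∑ i : Fin n, lenZ (π i.succ - π i.castSucc)

/-- `w(σ_{m,1})`: total weight of SAWs from `0` with `ℓ`-length in `[m, m+1)`. -/
noncomputable def zSawWeightIn (m : ℝ) : ℝ≥0∞ :=
  ∑' p : {p : Σ n : ℕ, Fin (n + 1) → ℤ //
      ZSAW p.1 p.2 ∧ zLen p.1 p.2 ∈ Set.Ico m (m + 1)},
    ENNReal.ofReal (zWeight p.1.1 p.1.2)

/-
Record a walk by its list of steps and write a step `d ≠ 0` as `|d|` unit moves in the direction
of `d`, marking the last of them. A self-avoiding walk of `ℓ`-length `m` thus becomes a word of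
length `m` over `Bool × Bool` (direction, marker) from which it can be read back, so there are at
most `4 ^ m` of them; as every weight is at most `1`, their total weight is at most `4 ^ m`.
-/

open Function

def boolSign (b : Bool) : ℤ := if b then 1 else -1

def encodeStep (d : ℤ) : List (Bool × Bool) :=
  List.replicate (d.natAbs - 1) (decide (0 < d), false) ++ [(decide (0 < d), true)]

def encodeSteps (l : List ℤ) : List (Bool × Bool) := l.flatMap encodeStep

/-- Read right to left, a marked move starts a new step and an unmarked one extends it. -/
def decodeMove (x : Bool × Bool) (acc : List ℤ) : List ℤ :=
  if x.2 then boolSign x.1 :: acc else (acc.headD 0 + boolSign x.1) :: acc.tail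

def decodeSteps (w : List (Bool × Bool)) : List ℤ := w.foldr decodeMove []

lemma foldr_decodeMove_replicate (s : Bool) (k : ℕ) (x : ℤ) (acc : List ℤ) :
    (List.replicate k (s, false)).foldr decodeMove (x :: acc) = (x + k * boolSign s) :: acc := by
  induction k with
  | zero => simp
  | succ k ih =>
    rw [List.replicate_succ, List.foldr_cons, ih]
    simp [decodeMove, add_mul, add_assoc]

lemma decodeSteps_encodeStep_append {d : ℤ} (hd : d ≠ 0) (w : List (Bool × Bool)) :
    decodeSteps (encodeStep d ++ w) = d :: decodeSteps w := by
  simp only [decodeSteps, encodeStep, List.foldr_append, List.foldr_cons, List.foldr_nil,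
    decodeMove, if_true, foldr_decodeMove_replicate]
  congr 1
  rcases hd.lt_or_gt with h | h <;> simp [boolSign, h, h.not_gt] <;> omega

lemma decodeSteps_encodeSteps {l : List ℤ} (hl : ∀ d ∈ l, d ≠ 0) :
    decodeSteps (encodeSteps l) = l := by
  induction l with
  | nil => rfl
  | cons d l ih =>
    rw [encodeSteps, List.flatMap_cons, decodeSteps_encodeStep_append (hl d (by simp))]
    exact congrArg _ (ih fun e he => hl e (by simp [he]))

lemma length_encodeSteps {l : List ℤ} (hl : ∀ d ∈ l, d ≠ 0) :
    (encodeSteps l).length = (l.map Int.natAbs).sum := by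
  induction l with
  | nil => rfl
  | cons d l ih =>
    have hd : d ≠ 0 := hl d (by simp)
    simp only [encodeSteps, List.flatMap_cons, List.length_append, List.map_cons,
      List.sum_cons] at ih ⊢
    rw [ih fun e he => hl e (by simp [he])]
    simp only [encodeStep, List.length_append, List.length_replicate, List.length_singleton]
    omega

def walkSteps (n : ℕ) (π : Fin (n + 1) → ℤ) : List ℤ :=
  List.ofFn fun i : Fin n => π i.succ - π i.castSucc

lemma walkSteps_ne_zero {n : ℕ} {π : Fin (n + 1) → ℤ} (hπ : Injective π) :
    ∀ d ∈ walkSteps n π, d ≠ 0 := by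
  simp only [walkSteps, List.mem_ofFn, forall_exists_index, forall_apply_eq_imp_iff]
  intro i hi
  exact i.castSucc_lt_succ.ne' (hπ (sub_eq_zero.mp hi))

lemma eq_of_walkSteps_eq {p q : Σ n : ℕ, Fin (n + 1) → ℤ} (hp : p.2 0 = 0) (hq : q.2 0 = 0)
    (h : walkSteps p.1 p.2 = walkSteps q.1 q.2) : p = q := by
  obtain ⟨n, π⟩ := p
  obtain ⟨n', ρ⟩ := q
  obtain rfl : n = n' := by simpa [walkSteps] using congrArg List.length h
  have hstep := congrFun (List.ofFn_injective h)
  suffices π = ρ by rw [this]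
  funext i
  induction i using Fin.induction with
  | zero => exact hp.trans hq.symm
  | succ i ih => have := hstep i; simp only at this; omega

lemma zLen_eq_sum_natAbs_walkSteps (n : ℕ) (π : Fin (n + 1) → ℤ) :
    zLen n π = ((walkSteps n π).map Int.natAbs).sum := by
  simp [zLen, walkSteps, lenZ, List.map_ofFn, List.sum_ofFn, Nat.cast_natAbs]

lemma phiZ_nonneg (d : ℤ) : 0 ≤ phiZ d := by
  unfold phiZ
  split_ifs
  exacts [le_rfl, inv_nonneg.mpr (abs_nonneg _)]

lemma phiZ_le_one (d : ℤ) : phiZ d ≤ 1 := by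
  unfold phiZ
  split_ifs with hd
  · exact zero_le_one
  · exact inv_le_one_of_one_le₀ (by exact_mod_cast Int.one_le_abs hd)

lemma zWeight_le_one (n : ℕ) (π : Fin (n + 1) → ℤ) : zWeight n π ≤ 1 :=
  Finset.prod_le_one (fun _ _ => phiZ_nonneg _) (fun _ _ => phiZ_le_one _)

lemma tsum_le_card_of_injective {α β : Type*} [Fintype β] {f : α → ℝ≥0∞}
    (hf : ∀ a, f a ≤ 1) {g : α → β} (hg : Injective g) : ∑' a, f a ≤ Fintype.card β :=
  calc ∑' a, f a ≤ ∑' _ : α, 1 := ENNReal.tsum_le_tsum hf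
    _ = ENat.card α := ENNReal.tsum_one
    _ ≤ Fintype.card β := by
      simpa using ENat.toENNReal_le.mpr (ENat.card_le_card_of_injective hg)

lemma limsup_rpow_one_div_le_of_le_pow {u : ℕ → ℝ≥0∞} {c : ℝ≥0∞}
    (h : ∀ m, 1 ≤ m → u m ≤ c ^ m) :
    limsup (fun m : ℕ => u m ^ (1 / (m : ℝ))) atTop ≤ c := by
  refine limsup_le_of_le (by isBoundedDefault) ?_
  filter_upwards [eventually_ge_atTop 1] with m hm
  calc u m ^ (1 / (m : ℝ))
      ≤ (c ^ m) ^ (1 / (m : ℝ)) := ENNReal.rpow_le_rpow (h m hm) (by positivity)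
    _ = c := by
      rw [← ENNReal.rpow_natCast, ← ENNReal.rpow_mul, mul_one_div_cancel (by positivity),
        ENNReal.rpow_one]

lemma length_encodeSteps_walkSteps {n m : ℕ} {π : Fin (n + 1) → ℤ} (hπ : Injective π)
    (hlen : zLen n π ∈ Set.Ico (m : ℝ) (m + 1)) :
    (encodeSteps (walkSteps n π)).length = m := by
  rw [zLen_eq_sum_natAbs_walkSteps] at hlen
  rw [length_encodeSteps (walkSteps_ne_zero hπ)]
  have : m ≤ ((walkSteps n π).map Int.natAbs).sum := by exact_mod_cast hlen.1
  have : ((walkSteps n π).map Int.natAbs).sum < m + 1 := by exact_mod_cast hlen.2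
  omega

def sawCode (m : ℕ) (p : {p : Σ n : ℕ, Fin (n + 1) → ℤ //
      ZSAW p.1 p.2 ∧ zLen p.1 p.2 ∈ Set.Ico (m : ℝ) (m + 1)}) :
    List.Vector (Bool × Bool) m :=
  ⟨encodeSteps (walkSteps p.1.1 p.1.2), length_encodeSteps_walkSteps p.2.1.1 p.2.2⟩

lemma sawCode_injective (m : ℕ) : Injective (sawCode m) := by
  intro ⟨p, ⟨hp, hp0⟩, _⟩ ⟨q, ⟨hq, hq0⟩, _⟩ h
  have hcode := congrArg (decodeSteps ∘ Subtype.val) h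
  simp only [sawCode, comp_apply, decodeSteps_encodeSteps (walkSteps_ne_zero hp),
    decodeSteps_encodeSteps (walkSteps_ne_zero hq)] at hcode
  exact Subtype.ext (eq_of_walkSteps_eq hp0 hq0 hcode)

lemma zSawWeightIn_le_four_pow (m : ℕ) : zSawWeightIn m ≤ 4 ^ m := by
  calc zSawWeightIn m ≤ Fintype.card (List.Vector (Bool × Bool) m) :=
        tsum_le_card_of_injective
          (fun _ => ENNReal.ofReal_le_one.mpr (zWeight_le_one _ _)) (sawCode_injective m)
    _ = 4 ^ m := by simp [card_vector]

/-- Example 3.9: on `Γ = ℤ` with `ℓ(n) = |n|` and `φ(n) = 1/|n|` (a non-summable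
weight), the total weight of SAWs from `0` with `ℓ`-length in `[m, m+1)` is at
most `4^m`; in particular `μ_{φ,ℓ} ≤ 4`. -/
theorem example_Z_connective_constant_le_four :
    (∀ m : ℕ, 1 ≤ m → zSawWeightIn (m : ℝ) ≤ (4 : ℝ≥0∞) ^ m) ∧
    Filter.limsup (fun m : ℕ => (zSawWeightIn (m : ℝ)) ^ (1 / (m : ℝ))) atTop ≤ 4 :=
  have bound (m : ℕ) (_ : 1 ≤ m) := zSawWeightIn_le_four_pow m
  ⟨bound, limsup_rpow_one_div_le_of_le_pow bound⟩
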